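/- Let G be a connected graph on n ≥ 2 vertices with distance matrix D(G) and eigenvalues listed in nonincreasing order. Then λ_2(D(G)) ≥ -1, with equality if and only if G is the complete graph K_n. -/

import Mathlib

noncomputable def sortedEigenvalues {ι : Type*} [Fintype ι] [DecidableEq ι]
    (A : Matrix ι ι ℝ) (hA : A.IsHermitian) : List ℝ :=
  (Finset.univ.val.map hA.eigenvalues).sort (· ≤ ·)

/-- `eig A hA k` is the `k`-th largest eigenvalue of `A` (1-indexed). -/
noncomputable def eig {ι : Type*} [Fintype ι] [DecidableEq ι]
    (A : Matrix ι ι ℝ) (hA : A.IsHermitian) (k : ℕ) : ℝ :=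
  (sortedEigenvalues A hA)[Fintype.card ι - k]!

/-!
If the quadratic form of a symmetric matrix `A` exceeds `c ‖w‖²` on every nonzero vector of a
`k`-dimensional subspace, then `A` has at least `k` eigenvalues above `c` (otherwise the subspace
meets the span of the eigenvectors with eigenvalue `≤ c`), so `λ_k(A) > c`.

For an edge `uv`, the form of `D(G)` on `span {e_u, e_v}` is `2ab ≥ -(a² + b²)`, whence
`λ₂ ≥ -1`. If `G` is connected but not complete, a shortest path between two non-adjacent
vertices starts with an induced path `i - k - j`, so `d(i, j) = 2`; on `span {e_i + e_j, e_k}`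
the form of `D(G) + I` is `6a² + 4ab + b² = 2a² + (2a + b)²`, positive definite, whence `λ₂ > -1`.
Finally `D(K_n) + I = J` has rank one, so all eigenvalues but one equal `-1`.
-/

open Finset Matrix

theorem List.SortedLE.lt_getElem_iff_length_sub_le_countP {α : Type*} [LinearOrder α]
    {l : List α} (hl : l.SortedLE) {m : ℕ} (hm : m < l.length) {c : α} :
    c < l[m] ↔ l.length - m ≤ l.countP (c < ·) := by
  constructor
  · intro hc
    have hdrop : (l.drop m).countP (c < ·) = (l.drop m).length := by
      refine List.countP_eq_length.2 fun a ha => ?_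
      obtain ⟨j, hj, rfl⟩ := List.getElem_of_mem ha
      rw [List.getElem_drop]
      simpa using hc.trans_le (hl.getElem_le_getElem_of_le (Nat.le_add_right m j))
    have hsplit := congrArg (List.countP (c < ·)) (l.take_append_drop m)
    rw [List.countP_append] at hsplit
    rw [List.length_drop] at hdrop
    omega
  · intro hcount
    by_contra! hc
    have htake : (l.take (m + 1)).countP (c < ·) = 0 := by
      refine List.countP_eq_zero.2 fun a ha => ?_
      obtain ⟨j, hj, rfl⟩ := List.getElem_of_mem ha
      rw [List.getElem_take]
      simpa using (hl.getElem_le_getElem_of_le (by rw [List.length_take] at hj; omega)).trans hc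
    have hsplit := congrArg (List.countP (c < ·)) (l.take_append_drop (m + 1))
    have hdrop := (l.drop (m + 1)).countP_le_length (p := (c < ·))
    rw [List.countP_append] at hsplit
    rw [List.length_drop] at hdrop
    omega

theorem Matrix.smul_add_smul_dotProduct_mulVec {ι : Type*} [Fintype ι] (M : Matrix ι ι ℝ)
    (x y : ι → ℝ) (a b : ℝ) :
    (a • x + b • y) ⬝ᵥ (M *ᵥ (a • x + b • y)) = a * a * (x ⬝ᵥ (M *ᵥ x)) +
      a * b * (x ⬝ᵥ (M *ᵥ y) + y ⬝ᵥ (M *ᵥ x)) + b * b * (y ⬝ᵥ (M *ᵥ y)) := by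
  simp only [dotProduct_add, add_dotProduct, mulVec_add, mulVec_smul, smul_dotProduct,
    dotProduct_smul, smul_eq_mul]
  ring

section Spectral

variable {ι : Type*} [Fintype ι] [DecidableEq ι]

theorem Matrix.dotProduct_mulVec_unitary {U : Matrix ι ι ℝ} (hU : U ∈ unitaryGroup ι ℝ)
    (x z : ι → ℝ) : (U *ᵥ x) ⬝ᵥ (U *ᵥ z) = x ⬝ᵥ z := by
  have hUU : Uᵀ * U = 1 := by
    simpa [star_eq_conjTranspose] using Unitary.star_mul_self_of_mem hU
  rw [dotProduct_mulVec, ← vecMul_transpose, vecMul_vecMul, hUU, vecMul_one]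

namespace Matrix.IsHermitian

variable {A : Matrix ι ι ℝ} (hA : A.IsHermitian)

theorem star_mul_eigenvectorUnitary_mul :
    star (hA.eigenvectorUnitary : Matrix ι ι ℝ) * A * hA.eigenvectorUnitary =
      diagonal hA.eigenvalues := by
  simpa [Unitary.conjStarAlgAut_star_apply] using hA.conjStarAlgAut_star_eigenvectorUnitary

theorem dotProduct_self_eq_sum_sq (w : ι → ℝ) :
    w ⬝ᵥ w = ∑ i, (star (hA.eigenvectorUnitary : Matrix ι ι ℝ) *ᵥ w) i ^ 2 := by
  rw [← dotProduct_mulVec_unitary (star hA.eigenvectorUnitary).2 w w]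
  simp [dotProduct, sq]

theorem dotProduct_mulVec_eq_sum (w : ι → ℝ) :
    w ⬝ᵥ (A *ᵥ w) =
      ∑ i, hA.eigenvalues i * (star (hA.eigenvectorUnitary : Matrix ι ι ℝ) *ᵥ w) i ^ 2 := by
  set U := hA.eigenvectorUnitary
  have hAw : star (U : Matrix ι ι ℝ) *ᵥ (A *ᵥ w) =
      diagonal hA.eigenvalues *ᵥ (star (U : Matrix ι ι ℝ) *ᵥ w) := by
    rw [← hA.star_mul_eigenvectorUnitary_mul, mulVec_mulVec, mulVec_mulVec, Matrix.mul_assoc,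
      Matrix.mul_assoc, Unitary.mul_star_self_of_mem U.2, mul_one]
  rw [← dotProduct_mulVec_unitary (star U).2, Unitary.coe_star, hAw]
  simp only [dotProduct, mulVec_diagonal]
  exact Finset.sum_congr rfl fun i _ => by ring

theorem dotProduct_mulVec_le_mul_dotProduct_self {c : ℝ} {w : ι → ℝ}
    (hw : ∀ i, c < hA.eigenvalues i → (star (hA.eigenvectorUnitary : Matrix ι ι ℝ) *ᵥ w) i = 0) :
    w ⬝ᵥ (A *ᵥ w) ≤ c * (w ⬝ᵥ w) := by
  rw [hA.dotProduct_mulVec_eq_sum, hA.dotProduct_self_eq_sum_sq, Finset.mul_sum]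
  refine Finset.sum_le_sum fun i _ => ?_
  by_cases hci : c < hA.eigenvalues i
  · simp [hw i hci]
  · exact mul_le_mul_of_nonneg_right (not_lt.1 hci) (sq_nonneg _)

theorem finrank_le_card_lt_eigenvalues {c : ℝ} (W : Submodule ℝ (ι → ℝ))
    (hW : ∀ w ∈ W, w ≠ 0 → c * (w ⬝ᵥ w) < w ⬝ᵥ (A *ᵥ w)) :
    Module.finrank ℝ W ≤ #{i | c < hA.eigenvalues i} := by
  by_contra! hlt
  let coords : W →ₗ[ℝ] ({i // c < hA.eigenvalues i} → ℝ) :=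
    LinearMap.funLeft ℝ ℝ Subtype.val ∘ₗ
      (star (hA.eigenvectorUnitary : Matrix ι ι ℝ)).mulVecLin ∘ₗ W.subtype
  obtain ⟨⟨w, hwW⟩, hker, hw0⟩ := Submodule.ne_bot_iff _ |>.1 <|
    LinearMap.ker_ne_bot_of_finrank_lt (f := coords) (by simpa [Fintype.card_subtype] using hlt)
  have hcoords : ∀ i, c < hA.eigenvalues i →
      (star (hA.eigenvectorUnitary : Matrix ι ι ℝ) *ᵥ w) i = 0 :=
    fun i hi => congrFun (LinearMap.mem_ker.1 hker) ⟨i, hi⟩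
  exact (hW w hwW (by simpa using hw0)).not_ge
    (hA.dotProduct_mulVec_le_mul_dotProduct_self hcoords)

theorem rank_sub_smul_one_eq_card (c : ℝ) :
    (A - c • 1).rank = #{i | hA.eigenvalues i ≠ c} := by
  set U := hA.eigenvectorUnitary
  have hdiag : ((star U : unitaryGroup ι ℝ) : Matrix ι ι ℝ) * (A - c • 1) * U =
      diagonal fun i => hA.eigenvalues i - c := by
    rw [Unitary.coe_star, Matrix.mul_sub, Matrix.sub_mul, hA.star_mul_eigenvectorUnitary_mul,
      Matrix.mul_smul, Matrix.smul_mul, mul_one, Unitary.star_mul_self_of_mem U.2,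
      smul_one_eq_diagonal, diagonal_sub]
  rw [← rank_mul_eq_left_of_isUnit_det _ _ (UnitaryGroup.det_isUnit U),
    ← rank_mul_eq_right_of_isUnit_det _ _ (UnitaryGroup.det_isUnit (star U)), ← Matrix.mul_assoc,
    hdiag, rank_diagonal, Fintype.card_subtype]
  simp [sub_eq_zero]

lemma length_sortedEigenvalues : (sortedEigenvalues A hA).length = Fintype.card ι := by
  simp [sortedEigenvalues]

lemma countP_sortedEigenvalues (p : ℝ → Prop) [DecidablePred p] :
    (sortedEigenvalues A hA).countP p = #{i | p (hA.eigenvalues i)} := by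
  rw [← Multiset.coe_countP, sortedEigenvalues, Multiset.sort_eq, Multiset.countP_map]
  rfl

theorem lt_eig_iff {k : ℕ} (hk : 0 < k) (hkn : k ≤ Fintype.card ι) {c : ℝ} :
    c < eig A hA k ↔ k ≤ #{i | c < hA.eigenvalues i} := by
  have hlen := hA.length_sortedEigenvalues
  have hsorted : (sortedEigenvalues A hA).SortedLE := (Multiset.pairwise_sort _ _).sortedLE
  rw [eig, getElem!_pos _ _ (by omega), hsorted.lt_getElem_iff_length_sub_le_countP,
    countP_sortedEigenvalues, hlen]
  omega

theorem lt_eig_of_le_finrank {k : ℕ} (hk : 0 < k) {c : ℝ} (W : Submodule ℝ (ι → ℝ))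
    (hkW : k ≤ Module.finrank ℝ W) (hW : ∀ w ∈ W, w ≠ 0 → c * (w ⬝ᵥ w) < w ⬝ᵥ (A *ᵥ w)) :
    c < eig A hA k := by
  have hWn : Module.finrank ℝ W ≤ Fintype.card ι := by simpa using W.finrank_le
  exact (hA.lt_eig_iff hk (hkW.trans hWn)).2 (hkW.trans (hA.finrank_le_card_lt_eigenvalues W hW))

theorem lt_eig_two_of_pair {c : ℝ} (x y : ι → ℝ)
    (h : ∀ a b : ℝ, a ≠ 0 ∨ b ≠ 0 →
      c * ((a • x + b • y) ⬝ᵥ (a • x + b • y)) < (a • x + b • y) ⬝ᵥ (A *ᵥ (a • x + b • y))) :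
    c < eig A hA 2 := by
  have hxy : LinearIndependent ℝ ![x, y] := by
    refine LinearIndependent.pair_iff.2 fun a b hab => ?_
    by_contra hne
    simpa [hab] using h a b (not_and_or.1 hne)
  refine hA.lt_eig_of_le_finrank two_pos (Submodule.span ℝ {x, y}) ?_ ?_
  · rw [← range_cons_cons_empty x y ![]]
    exact (finrank_span_eq_card hxy).ge
  · rintro w hw hw0
    obtain ⟨a, b, rfl⟩ := Submodule.mem_span_pair.1 hw
    refine h a b ?_
    by_contra! hab
    simp [hab] at hw0

theorem eig_le_of_rank_sub_smul_one_lt {k : ℕ} (hk : 0 < k) (hkn : k ≤ Fintype.card ι) {c : ℝ}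
    (hrank : (A - c • 1).rank < k) : eig A hA k ≤ c := by
  by_contra! hc
  have hcard := (hA.lt_eig_iff hk hkn).1 hc
  have hsub : #{i | c < hA.eigenvalues i} ≤ #{i | hA.eigenvalues i ≠ c} :=
    card_le_card fun i => by simpa using fun h => h.ne'
  rw [hA.rank_sub_smul_one_eq_card] at hrank
  omega

end Matrix.IsHermitian

end Spectral

namespace SimpleGraph

variable {V : Type*}

lemma Connected.exists_adj_adj_dist_eq_two {G : SimpleGraph V} (hG : G.Connected) (hne : G ≠ ⊤) :
    ∃ i k j, G.Adj i k ∧ G.Adj k j ∧ G.dist i j = 2 := by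
  obtain ⟨p, q, hpq, hpq'⟩ : ∃ p q, p ≠ q ∧ ¬ G.Adj p q := by
    by_contra! h
    exact hne (SimpleGraph.ext (funext₂ fun p q => propext ⟨Adj.ne, h p q⟩))
  obtain ⟨w, hw⟩ := hG.exists_walk_length_eq_dist p q
  have hdist : 1 < G.dist p q := by
    have := hG.dist_eq_zero_iff.not.2 hpq
    have := dist_eq_one_iff_adj.not.2 hpq'
    omega
  obtain ⟨i, k, j, hik, hkj, hij, hij'⟩ := w.exists_adj_adj_not_adj_ne hw hdist
  refine ⟨i, k, j, hik, hkj, ?_⟩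
  have htri : G.dist i j ≤ 1 + 1 := by
    simpa [dist_eq_one_iff_adj.2 hik, dist_eq_one_iff_adj.2 hkj] using
      hG.dist_triangle (u := i) (v := k) (w := j)
  have := hG.dist_eq_zero_iff.not.2 hij'
  have := dist_eq_one_iff_adj.not.2 hij
  omega

variable (G : SimpleGraph V)

noncomputable def distMatrix : Matrix V V ℝ := Matrix.of fun i j => (G.dist i j : ℝ)

@[simp]
lemma distMatrix_apply (i j : V) : G.distMatrix i j = G.dist i j := rfl

lemma distMatrix_top_sub_neg_one_smul_one [DecidableEq V] :
    (⊤ : SimpleGraph V).distMatrix - (-1 : ℝ) • 1 = vecMulVec 1 1 := by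
  ext i j
  by_cases hij : i = j <;> simp [hij, one_apply, vecMulVec_apply, dist_top_of_ne]

variable [Fintype V] [DecidableEq V]

lemma eig_two_distMatrix_top_le (hD : (⊤ : SimpleGraph V).distMatrix.IsHermitian)
    (hV : 2 ≤ Fintype.card V) : eig _ hD 2 ≤ -1 := by
  refine hD.eig_le_of_rank_sub_smul_one_lt two_pos hV ?_
  rw [distMatrix_top_sub_neg_one_smul_one]
  exact (rank_vecMulVec_le _ _).trans_lt one_lt_two

lemma neg_one_le_eig_two [Nontrivial V] (hG : G.Connected) (hD : G.distMatrix.IsHermitian) :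
    -1 ≤ eig _ hD 2 := by
  obtain ⟨u, v, huv⟩ : ∃ u v, G.Adj u v :=
    ⟨_, hG.preconnected.exists_adj_of_nontrivial (Classical.arbitrary V)⟩
  refine le_of_forall_lt fun c hc => hD.lt_eig_two_of_pair (Pi.single u 1) (Pi.single v 1) ?_
  intro a b hab
  have hnorm : (a • Pi.single u 1 + b • Pi.single v 1) ⬝ᵥ (a • Pi.single u 1 + b • Pi.single v 1)
      = a ^ 2 + b ^ 2 := by
    simp [huv.ne, huv.ne.symm]
    ring
  have hform : (a • Pi.single u 1 + b • Pi.single v 1) ⬝ᵥ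
      (G.distMatrix *ᵥ (a • Pi.single u 1 + b • Pi.single v 1)) = 2 * a * b := by
    rw [smul_add_smul_dotProduct_mulVec]
    simp [dist_eq_one_iff_adj.2 huv, dist_eq_one_iff_adj.2 huv.symm]
    ring
  have hpos : 0 < a ^ 2 + b ^ 2 := by
    rcases hab with h | h <;> positivity
  rw [hnorm, hform]
  nlinarith [sq_nonneg (a + b)]

lemma neg_one_lt_eig_two_of_ne_top (hG : G.Connected) (hne : G ≠ ⊤)
    (hD : G.distMatrix.IsHermitian) : -1 < eig _ hD 2 := by
  obtain ⟨i, k, j, hik, hkj, hij⟩ := hG.exists_adj_adj_dist_eq_two hne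
  have hij' : i ≠ j := by rintro rfl; simp at hij
  refine hD.lt_eig_two_of_pair (Pi.single i 1 + Pi.single j 1) (Pi.single k 1) fun a b hab => ?_
  have hnorm : (a • (Pi.single i 1 + Pi.single j 1) + b • Pi.single k 1) ⬝ᵥ
      (a • (Pi.single i 1 + Pi.single j 1) + b • Pi.single k 1) = 2 * a ^ 2 + b ^ 2 := by
    simp [hij', hij'.symm, hik.ne, hik.ne.symm, hkj.ne, hkj.ne.symm]
    ring
  have hform : (a • (Pi.single i 1 + Pi.single j 1) + b • Pi.single k 1) ⬝ᵥ
      (G.distMatrix *ᵥ (a • (Pi.single i 1 + Pi.single j 1) + b • Pi.single k 1)) =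
        4 * a ^ 2 + 4 * a * b := by
    rw [smul_add_smul_dotProduct_mulVec]
    simp [dist_eq_one_iff_adj.2 hik, dist_eq_one_iff_adj.2 hik.symm, dist_eq_one_iff_adj.2 hkj,
      dist_eq_one_iff_adj.2 hkj.symm, hij, dist_comm (u := j), add_dotProduct, dotProduct_add,
      mulVec_add]
    ring
  have hpos : 0 < 2 * a ^ 2 + (2 * a + b) ^ 2 := by
    rcases eq_or_ne a 0 with rfl | ha
    · simpa [sq_pos_iff] using hab
    · positivity
  rw [hnorm, hform]
  nlinarith

end SimpleGraph

theorem second_distance_eigenvalue_ge_neg_one {n : ℕ} (hn : 2 ≤ n)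
    (G : SimpleGraph (Fin n)) (hG : G.Connected)
    (hD : (Matrix.of fun i j => (G.dist i j : ℝ)).IsHermitian) :
    -1 ≤ eig _ hD 2 ∧ (eig _ hD 2 = -1 ↔ G = ⊤) := by
  have : Nontrivial (Fin n) := Fin.nontrivial_iff_two_le.2 hn
  have hle : -1 ≤ eig _ hD 2 := G.neg_one_le_eig_two hG hD
  refine ⟨hle, fun heq => ?_, ?_⟩
  · by_contra hne
    exact (G.neg_one_lt_eig_two_of_ne_top hG hne hD).ne' heq
  · rintro rfl
    exact le_antisymm (SimpleGraph.eig_two_distMatrix_top_le hD (by simpa using hn)) hle
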